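/- arXiv:2507.22786 — 2 statements merged into one kernel-verified Lean document; each statement's English description precedes it below -/
import Mathlib

section
/- Let H be a Hermitian matrix indexed by Fin dV × Fin dL. Then exp(H) is block diagonal with respect to the first factor if and only if H is block diagonal with respect to the first factor. (Hence a Hamiltonian-based model ρ(θ) = exp(H(θ))/Tr(exp H(θ)) is a CQ-LVM if and only if its Hamiltonian is a direct sum H = ⊕_i H_i of Hermitian operators on ℂ^{dL}.) -/
open Matrix
open scoped Kronecker ComplexOrder

noncomputable section

/-- The partial trace over the second tensor factor. -/
def ptrace {dA dB : ℕ} (ρ : Matrix (Fin dA × Fin dB) (Fin dA × Fin dB) ℂ) :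
    Matrix (Fin dA) (Fin dA) ℂ :=
  Matrix.of fun a a' => ∑ b : Fin dB, ρ (a, b) (a', b)

/-- Matrix logarithm of a Hermitian matrix, applying the real logarithm to the
eigenvalues in a spectral decomposition (junk value `0` for non-Hermitian input). -/
def mlog {n : Type*} [Fintype n] [DecidableEq n] (A : Matrix n n ℂ) : Matrix n n ℂ :=
  if h : A.IsHermitian then h.cfc Real.log else 0

open Classical in
/-- The positive semidefinite square root (junk value `0` otherwise). -/
def msqrt {n : Type*} [Fintype n] [DecidableEq n] (A : Matrix n n ℂ) : Matrix n n ℂ :=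
  if h : A.PosSemidef then
    (h.1.eigenvectorUnitary : Matrix n n ℂ) *
      diagonal ((↑) ∘ (√·) ∘ h.1.eigenvalues) * (star h.1.eigenvectorUnitary : Matrix n n ℂ)
  else 0

/-- A density matrix: Hermitian positive semidefinite with trace one. -/
def IsDensityMatrix {n : Type*} [Fintype n] [DecidableEq n] (A : Matrix n n ℂ) : Prop :=
  A.PosSemidef ∧ A.trace = 1

/-- The von Neumann entropy `S(A) = -Tr(A log A)`. -/
def vnEntropy {n : Type*} [Fintype n] [DecidableEq n] (A : Matrix n n ℂ) : ℂ :=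
  -(A * mlog A).trace

/-- The Umegaki relative entropy `D(ω‖ρ) = Tr(ω log ω) - Tr(ω log ρ)`. -/
def relEnt {n : Type*} [Fintype n] [DecidableEq n] (ω ρ : Matrix n n ℂ) : ℂ :=
  (ω * mlog ω).trace - (ω * mlog ρ).trace

/-- The Petz recovery map for the partial trace:
`R_ρ(ω) = ρ^{1/2} ((ρ_A^{-1/2} ω ρ_A^{-1/2}) ⊗ I_B) ρ^{1/2}`. -/
def petz {dA dB : ℕ} (ρ : Matrix (Fin dA × Fin dB) (Fin dA × Fin dB) ℂ)
    (ω : Matrix (Fin dA) (Fin dA) ℂ) : Matrix (Fin dA × Fin dB) (Fin dA × Fin dB) ℂ :=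
  msqrt ρ * (((msqrt (ptrace ρ))⁻¹ * ω * (msqrt (ptrace ρ))⁻¹) ⊗ₖ
    (1 : Matrix (Fin dB) (Fin dB) ℂ)) * msqrt ρ

/-- Condition S: `ρ` is positive definite and separable of the form
`ρ = ∑ i, α i • (x i x i† ⊗ ρ_B i)` for an orthonormal basis `x` of `ℂ^{dA}`, `α i > 0`,
density matrices `ρ_B i`, and `ω` commutes with `Tr_B ρ`. -/
def CondS {dA dB : ℕ} (ω : Matrix (Fin dA) (Fin dA) ℂ)
    (ρ : Matrix (Fin dA × Fin dB) (Fin dA × Fin dB) ℂ) : Prop :=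
  ρ.PosDef ∧
  (∃ (x : Fin dA → (Fin dA → ℂ)) (α : Fin dA → ℝ) (σ : Fin dA → Matrix (Fin dB) (Fin dB) ℂ),
    (∀ i j, star (x i) ⬝ᵥ x j = if i = j then 1 else 0) ∧
    (∀ i, 0 < α i) ∧ (∀ i, IsDensityMatrix (σ i)) ∧
    ρ = ∑ i, (α i : ℂ) • (Matrix.vecMulVec (x i) (star (x i)) ⊗ₖ σ i)) ∧
  ω * ptrace ρ = ptrace ρ * ω

/-- A matrix on a product index type is block diagonal with respect to the first factor. -/
def BlockDiagFst {α β : Type*} (M : Matrix (α × β) (α × β) ℂ) : Prop :=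
  ∀ u a v b, u ≠ v → M (u, a) (v, b) = 0

/-- The `i`-th diagonal block of a matrix on a product index type. -/
def blockFst {α β : Type*} (M : Matrix (α × β) (α × β) ℂ) (i : α) : Matrix β β ℂ :=
  Matrix.of fun k l => M (i, k) (i, l)

/-!
Block diagonality with respect to the first factor is commutation with `diagonal (f ∘ Prod.fst)`
for any injective `f`, so it suffices to show that `exp H` and `H` have the same commutant. One
inclusion holds because `exp H` is a power series in `H`; the other because, `H` being
self-adjoint, `H = log (exp H)` is a continuous function of `exp H`.
-/

theorem Matrix.commute_diagonal_iff {n R : Type*} [Fintype n] [DecidableEq n] [CommRing R]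
    [NoZeroDivisors R] {d : n → R} {C : Matrix n n R} :
    Commute (diagonal d) C ↔ ∀ s t, d s ≠ d t → C s t = 0 := by
  rw [commute_iff_eq, ← Matrix.ext_iff]
  simp only [diagonal_mul, mul_diagonal]
  refine forall₂_congr fun s t => ?_
  rw [mul_comm, ← sub_eq_zero, ← mul_sub, mul_eq_zero, sub_eq_zero, or_iff_not_imp_right]

theorem blockDiagFst_iff_commute_diagonal {α β : Type*} [Fintype α] [Fintype β] [DecidableEq α]
    [DecidableEq β] {f : α → ℂ} (hf : Function.Injective f)
    {M : Matrix (α × β) (α × β) ℂ} :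
    BlockDiagFst M ↔ Commute (diagonal (f ∘ Prod.fst)) M := by
  simp only [commute_diagonal_iff, BlockDiagFst, Prod.forall, Function.comp_apply, hf.ne_iff]

theorem IsSelfAdjoint.commute_exp_iff {A : Type*} [NormedRing A] [StarRing A]
    [NormedAlgebra ℝ A] [ContinuousFunctionalCalculus ℝ A IsSelfAdjoint]
    {a b : A} (ha : IsSelfAdjoint a) :
    Commute (NormedSpace.exp a) b ↔ Commute a b := by
  refine ⟨fun h => ?_, fun h => h.symm.exp_right.symm⟩
  rw [← CFC.log_exp a ha]
  exact h.cfc_real Real.log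

section
open scoped Matrix.Norms.L2Operator

theorem Matrix.IsHermitian.commute_exp_iff {n : Type*} [Fintype n] [DecidableEq n]
    {H : Matrix n n ℂ} (hH : H.IsHermitian) {B : Matrix n n ℂ} :
    Commute (NormedSpace.exp H) B ↔ Commute H B :=
  hH.isSelfAdjoint.commute_exp_iff

end

/-- A Hamiltonian-based model is a CQ-LVM iff its Hamiltonian is a
direct sum: `exp H` is block diagonal iff `H` is block diagonal. -/
theorem exp_blockDiag_iff {dV dL : ℕ}
    (H : Matrix (Fin dV × Fin dL) (Fin dV × Fin dL) ℂ) (hH : H.IsHermitian) :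
    BlockDiagFst (NormedSpace.exp H) ↔ BlockDiagFst H := by
  have hf : Function.Injective fun i : Fin dV => ((i : ℕ) : ℂ) :=
    Nat.cast_injective.comp Fin.val_injective
  rw [blockDiagFst_iff_commute_diagonal hf, blockDiagFst_iff_commute_diagonal hf]
  exact Commute.symm_iff.trans (hH.commute_exp_iff.trans Commute.symm_iff)
end
end

section
/- Let ρ be a positive definite density matrix on ℂ^{dV}⊗ℂ^{dL} that is block diagonal with respect to the first factor, with blocks ρ_L(i) and P(i) = Tr(ρ_L(i)), and let η_V be a positive definite diagonal density matrix on ℂ^{dV} with diagonal entries q_i. Then the Petz recovery map output R_ρ(η_V) is block diagonal with respect to the first factor, with i-th block equal to (q_i / P(i))·ρ_L(i); i.e. R_ρ(η_V) = ⊕_i q_i · (ρ_L(i)/P(i)), the conditional blocks of ρ reweighted by the target distribution. -/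
open Matrix
open scoped Kronecker ComplexOrder

noncomputable section

/-! Block diagonality of `ρ` propagates through every factor of the Petz map. The square root
`ρ^{1/2}` is block diagonal with blocks `ρ_L(i)^{1/2}`, and `Tr_L ρ = diag P`, so
`ρ_V^{-1/2} η_V ρ_V^{-1/2} = diag (q_i / P(i))`, whose Kronecker product with `I_L` is block
diagonal with scalar blocks. Hence the `i`-th block of `R_ρ(η_V)` is
`ρ_L(i)^{1/2} (q_i / P(i)) ρ_L(i)^{1/2} = (q_i / P(i)) ρ_L(i)`. -/

section MatrixSqrt

open scoped MatrixOrder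

variable {n : Type*} [Fintype n] [DecidableEq n]

lemma msqrt_eq_cfcSqrt {A : Matrix n n ℂ} (hA : A.PosSemidef) : msqrt A = CFC.sqrt A := by
  rw [msqrt, dif_pos hA, CFC.sqrt_eq_cfc, cfc_nnreal_eq_real _ A hA.nonneg, hA.1.cfc_eq,
    IsHermitian.cfc, Unitary.conjStarAlgAut_apply]
  congr! 3 with i
  funext i
  simp only [Function.comp_apply, Real.coe_sqrt, Real.coe_toNNReal _ (hA.eigenvalues_nonneg i)]
  rfl

lemma posSemidef_msqrt {A : Matrix n n ℂ} (hA : A.PosSemidef) : (msqrt A).PosSemidef :=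
  msqrt_eq_cfcSqrt hA ▸ (CFC.sqrt_nonneg A).posSemidef

lemma msqrt_mul_self {A : Matrix n n ℂ} (hA : A.PosSemidef) : msqrt A * msqrt A = A :=
  msqrt_eq_cfcSqrt hA ▸ CFC.sqrt_mul_sqrt_self A hA.nonneg

lemma msqrt_eq_of_mul_self_eq {A B : Matrix n n ℂ} (hB : B.PosSemidef) (h : B * B = A) :
    msqrt A = B := by
  have hA : A.PosSemidef := by
    simpa only [← h, hB.1.eq] using posSemidef_conjTranspose_mul_self B
  rw [msqrt_eq_cfcSqrt hA, CFC.sqrt_unique h hB.nonneg]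

lemma msqrt_diagonal {d : n → ℂ} (hd : 0 ≤ d) :
    msqrt (diagonal d) = diagonal fun i => CFC.sqrt (d i) := by
  refine msqrt_eq_of_mul_self_eq (PosSemidef.diagonal fun i => CFC.sqrt_nonneg (d i)) ?_
  rw [diagonal_mul_diagonal]
  exact congrArg diagonal (funext fun i => CFC.sqrt_mul_sqrt_self (d i) (hd i))

lemma inv_diagonal_of_ne_zero {s : n → ℂ} (hs : ∀ i, s i ≠ 0) :
    (diagonal s)⁻¹ = diagonal s⁻¹ := by
  refine inv_eq_right_inv ?_
  rw [diagonal_mul_diagonal, ← diagonal_one]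
  exact congrArg diagonal (funext fun i => mul_inv_cancel₀ (hs i))

end MatrixSqrt

lemma posSemidef_blockDiagonal {m n : Type*} [Fintype m] [DecidableEq m] [Fintype n]
    [DecidableEq n] {B : m → Matrix n n ℂ} (hB : ∀ i, (B i).PosSemidef) :
    (blockDiagonal B).PosSemidef := by
  have hB_eq : blockDiagonal B =
      (blockDiagonal fun i => msqrt (B i))ᴴ * blockDiagonal fun i => msqrt (B i) := by
    rw [blockDiagonal_conjTranspose, ← blockDiagonal_mul]
    exact congrArg _ (funext fun i => by
      rw [(posSemidef_msqrt (hB i)).1.eq, msqrt_mul_self (hB i)])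
  exact hB_eq ▸ posSemidef_conjTranspose_mul_self _

def fstBlockDiagonal {α β : Type*} [DecidableEq α] (B : α → Matrix β β ℂ) :
    Matrix (α × β) (α × β) ℂ :=
  reindex (Equiv.prodComm β α) (Equiv.prodComm β α) (blockDiagonal B)

section FstBlockDiagonal

variable {α β : Type*} [DecidableEq α]

lemma fstBlockDiagonal_apply (B : α → Matrix β β ℂ) (i j : α) (k l : β) :
    fstBlockDiagonal B (i, k) (j, l) = if i = j then B i k l else 0 :=
  blockDiagonal_apply B (k, i) (l, j)

lemma blockDiagFst_fstBlockDiagonal (B : α → Matrix β β ℂ) :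
    BlockDiagFst (fstBlockDiagonal B) :=
  fun i k j l hij => by rw [fstBlockDiagonal_apply, if_neg hij]

lemma blockFst_fstBlockDiagonal (B : α → Matrix β β ℂ) (i : α) :
    blockFst (fstBlockDiagonal B) i = B i := by
  ext k l
  rw [blockFst, of_apply, fstBlockDiagonal_apply, if_pos rfl]

lemma BlockDiagFst.eq_fstBlockDiagonal_blockFst {M : Matrix (α × β) (α × β) ℂ}
    (hM : BlockDiagFst M) : M = fstBlockDiagonal (blockFst M) := by
  ext ⟨i, k⟩ ⟨j, l⟩
  rw [fstBlockDiagonal_apply]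
  split_ifs with hij
  · subst hij; rfl
  · exact hM i k j l hij

lemma diagonal_kronecker_eq_fstBlockDiagonal (c : α → ℂ) (A : Matrix β β ℂ) :
    diagonal c ⊗ₖ A = fstBlockDiagonal fun i => c i • A :=
  diagonal_kronecker c A

variable [Fintype α] [Fintype β]

lemma fstBlockDiagonal_mul (A B : α → Matrix β β ℂ) :
    fstBlockDiagonal A * fstBlockDiagonal B = fstBlockDiagonal (A * B) := by
  rw [fstBlockDiagonal, fstBlockDiagonal, fstBlockDiagonal, reindex_apply, reindex_apply,
    reindex_apply, submatrix_mul_equiv, ← blockDiagonal_mul]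
  rfl

variable [DecidableEq β]

lemma msqrt_fstBlockDiagonal {B : α → Matrix β β ℂ} (hB : ∀ i, (B i).PosSemidef) :
    msqrt (fstBlockDiagonal B) = fstBlockDiagonal fun i => msqrt (B i) := by
  refine msqrt_eq_of_mul_self_eq
    ((posSemidef_blockDiagonal fun i => posSemidef_msqrt (hB i)).submatrix _) ?_
  rw [fstBlockDiagonal_mul]
  exact congrArg fstBlockDiagonal (funext fun i => msqrt_mul_self (hB i))

end FstBlockDiagonal

lemma Matrix.PosDef.blockFst {α β : Type*} [Fintype β] {M : Matrix (α × β) (α × β) ℂ}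
    (hM : M.PosDef) (i : α) : (blockFst M i).PosDef :=
  hM.submatrix (Prod.mk_right_injective i)

lemma ptrace_fstBlockDiagonal {dA dB : ℕ} (B : Fin dA → Matrix (Fin dB) (Fin dB) ℂ) :
    ptrace (fstBlockDiagonal B) = diagonal fun i => (B i).trace := by
  ext i j
  simp only [ptrace, of_apply, fstBlockDiagonal_apply, diagonal_apply, trace, diag,
    Finset.sum_ite_irrel, Finset.sum_const_zero]

theorem petz_fstBlockDiagonal_diagonal {dA dB : ℕ} {B : Fin dA → Matrix (Fin dB) (Fin dB) ℂ}
    (hB : ∀ i, (B i).PosSemidef) (htr : ∀ i, (B i).trace ≠ 0) (q : Fin dA → ℂ) :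
    petz (fstBlockDiagonal B) (diagonal q) =
      fstBlockDiagonal fun i => (q i / (B i).trace) • B i := by
  have hsqrt_sq : ∀ i, CFC.sqrt (B i).trace * CFC.sqrt (B i).trace = (B i).trace :=
    fun i => CFC.sqrt_mul_sqrt_self _ (hB i).trace_nonneg
  have hsqrt_ne : ∀ i, CFC.sqrt (B i).trace ≠ 0 :=
    fun i h => htr i (by rw [← hsqrt_sq i, h, zero_mul])
  have hmid : (diagonal fun i => CFC.sqrt (B i).trace)⁻¹ * diagonal q *
      (diagonal fun i => CFC.sqrt (B i).trace)⁻¹ = diagonal fun i => q i / (B i).trace := by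
    rw [inv_diagonal_of_ne_zero hsqrt_ne, diagonal_mul_diagonal, diagonal_mul_diagonal]
    refine congrArg diagonal (funext fun i => ?_)
    conv_rhs => rw [← hsqrt_sq i]
    simp only [Pi.inv_apply]
    ring
  rw [petz, ptrace_fstBlockDiagonal, msqrt_diagonal fun i => (hB i).trace_nonneg, hmid,
    msqrt_fstBlockDiagonal hB, diagonal_kronecker_eq_fstBlockDiagonal, fstBlockDiagonal_mul,
    fstBlockDiagonal_mul]
  refine congrArg fstBlockDiagonal (funext fun i => ?_)
  simp only [Pi.mul_apply, mul_smul_comm, mul_one, smul_mul_assoc, msqrt_mul_self (hB i)]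

theorem petz_blockDiag_general {dV dL : ℕ}
    (ρ : Matrix (Fin dV × Fin dL) (Fin dV × Fin dL) ℂ)
    (hρ : ρ.PosDef) (hBD : BlockDiagFst ρ)
    (q : Fin dV → ℂ) (ηV : Matrix (Fin dV) (Fin dV) ℂ) (hηV : ηV = Matrix.diagonal q) :
    BlockDiagFst (petz ρ ηV) ∧
    ∀ i : Fin dV, blockFst (petz ρ ηV) i
        = (q i / (blockFst ρ i).trace) • blockFst ρ i := by
  rcases isEmpty_or_nonempty (Fin dL) with hL | hL
  · exact ⟨fun _ k => isEmptyElim k, fun _ => Matrix.ext fun k => isEmptyElim k⟩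
  obtain ⟨B, rfl⟩ : ∃ B, ρ = fstBlockDiagonal B := ⟨_, hBD.eq_fstBlockDiagonal_blockFst⟩
  have hB : ∀ i, (B i).PosDef := fun i => blockFst_fstBlockDiagonal B i ▸ hρ.blockFst i
  subst hηV
  rw [petz_fstBlockDiagonal_diagonal (fun i => (hB i).posSemidef)
    (fun i => (hB i).trace_pos.ne') q]
  exact ⟨blockDiagFst_fstBlockDiagonal _, fun i => by simp only [blockFst_fstBlockDiagonal]⟩

/-- For a block-diagonal model and a diagonal target, the Petz recovery map
returns the conditional blocks reweighted by the target distribution. -/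
theorem petz_blockDiag {dV dL : ℕ}
    (ρ : Matrix (Fin dV × Fin dL) (Fin dV × Fin dL) ℂ)
    (hρ : ρ.PosDef) (hρ1 : ρ.trace = 1) (hBD : BlockDiagFst ρ)
    (q : Fin dV → ℂ) (ηV : Matrix (Fin dV) (Fin dV) ℂ) (hηV : ηV = Matrix.diagonal q)
    (hηVpd : ηV.PosDef) (hηV1 : ηV.trace = 1) :
    BlockDiagFst (petz ρ ηV) ∧
    ∀ i : Fin dV, blockFst (petz ρ ηV) i
        = (q i / (blockFst ρ i).trace) • blockFst ρ i :=
  petz_blockDiag_general ρ hρ hBD q ηV hηV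
end
end
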